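/- Let N ≥ 1 be an integer, let F : ℂ^N → ℂ^N be quadratic, i.e. F(z) = B(z,z) + A(z) for a symmetric bilinear map B : ℂ^N × ℂ^N → ℂ^N and a linear map A : ℂ^N → ℂ^N, and let R > 0. Then for every λ ≥ 1 and α ∈ [0,1] there exists a constant D > 0, depending only on N, R, the operator norms of A and B, λ and α, such that for all twice continuously differentiable y₁, y₂, h : [0,1] → ℂ^N with ‖y₁‖_{H²} ≤ R and ‖y₂‖_{H²} ≤ R, one has |L_{λ,α,y₁}(h) − L_{λ,α,y₂}(h)| ≤ D ‖y₁ − y₂‖_{H²} ‖h‖_{H²}. (Theorem 4.2, Lipschitz continuity of the Fréchet derivative of J_{λ,α}.) -/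

import Mathlib

/-!
Write `L_{λ,α,y}(h) = e^{2λ} ∫₀¹ 2 Re⟨P_y, Q_y⟩ e^{-2λx} dx + 2α⟨y,h⟩_{H²}` with
`P_y = h'' + 2B(y',h') + A(h')` and `Q_y = y'' + F(y')`. Then
`⟨P₁,Q₁⟩ - ⟨P₂,Q₂⟩ = ⟨P₁ - P₂, Q₁⟩ + ⟨P₂, Q₁ - Q₂⟩`, where `P₁ - P₂ = 2B(y₁' - y₂', h')` and
`Q₁ - Q₂ = (y₁ - y₂)'' + B(y₁' - y₂', y₁') + B(y₂', y₁' - y₂') + A(y₁' - y₂')`.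
The one-dimensional Sobolev embedding `sup_{[0,1]} |g'| ≤ 2‖g‖_{H²}` controls every first
derivative pointwise, the second derivatives are only square integrable and are paired by
Cauchy–Schwarz, and the weight satisfies `e^{-2λx} ≤ 1` on `[0,1]`. The `α`-term is
Cauchy–Schwarz for the `H²` inner product.
-/

open MeasureTheory

/-- The `H²(0,1)` norm of a function `g : [0,1] → ℂ^N`:
`‖g‖_{H²}² = ∫₀¹ (|g|² + |g'|² + |g''|²) dx`. -/
noncomputable def H2norm {N : ℕ} (g : ℝ → EuclideanSpace ℂ (Fin N)) : ℝ :=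
  Real.sqrt (∫ x in (0:ℝ)..1,
    (‖g x‖ ^ 2 + ‖deriv g x‖ ^ 2 + ‖deriv (deriv g) x‖ ^ 2))

/-- The real `H²(0,1)` inner product
`⟨g,h⟩_{H²} = ∫₀¹ Re(⟨g,h⟩ + ⟨g',h'⟩ + ⟨g'',h''⟩) dx`. -/
noncomputable def H2inner {N : ℕ} (g h : ℝ → EuclideanSpace ℂ (Fin N)) : ℝ :=
  ∫ x in (0:ℝ)..1,
    (((inner ℂ (g x) (h x) : ℂ)).re + ((inner ℂ (deriv g x) (deriv h x) : ℂ)).re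
      + ((inner ℂ (deriv (deriv g) x) (deriv (deriv h) x) : ℂ)).re)

/-- The weighted Tikhonov-like functional
`J_{λ,α}(y) = e^{2λ} ∫₀¹ |y'' + F(y')|² e^{-2λx} dx + α‖y‖_{H²}²`. -/
noncomputable def Jfun {N : ℕ}
    (F : EuclideanSpace ℂ (Fin N) → EuclideanSpace ℂ (Fin N))
    (lam α : ℝ) (y : ℝ → EuclideanSpace ℂ (Fin N)) : ℝ :=
  Real.exp (2 * lam) *
      (∫ x in (0:ℝ)..1, ‖deriv (deriv y) x + F (deriv y x)‖ ^ 2 * Real.exp (-2 * lam * x))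
    + α * (H2norm y) ^ 2

/-- The linearization (Fréchet derivative) of `J_{λ,α}` at `y` applied to `h`, where
`F(z) = B(z,z) + A(z)`:
`L_{λ,α,y}(h) = e^{2λ} ∫₀¹ 2Re⟨h'' + 2B(y',h') + A(h'), y'' + F(y')⟩ e^{-2λx} dx
  + 2α⟨y,h⟩_{H²}`. -/
noncomputable def Lfun {N : ℕ}
    (B : EuclideanSpace ℂ (Fin N) →L[ℂ] EuclideanSpace ℂ (Fin N) →L[ℂ] EuclideanSpace ℂ (Fin N))
    (A : EuclideanSpace ℂ (Fin N) →L[ℂ] EuclideanSpace ℂ (Fin N))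
    (lam α : ℝ) (y h : ℝ → EuclideanSpace ℂ (Fin N)) : ℝ :=
  Real.exp (2 * lam) *
      (∫ x in (0:ℝ)..1,
        2 * ((inner ℂ (deriv (deriv h) x + (2:ℂ) • B (deriv y x) (deriv h x) + A (deriv h x))
              (deriv (deriv y) x + (B (deriv y x) (deriv y x) + A (deriv y x))) : ℂ)).re
          * Real.exp (-2 * lam * x))
    + 2 * α * H2inner y h

theorem integral_mul_le_of_integral_sq_le {φ ψ : ℝ → ℝ} (hφ : Continuous φ) (hψ : Continuous ψ)
    {a b F G : ℝ} (hab : a ≤ b) (hF : 0 ≤ F) (hG : 0 ≤ G)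
    (hφF : ∫ x in a..b, φ x ^ 2 ≤ F ^ 2) (hψG : ∫ x in a..b, ψ x ^ 2 ≤ G ^ 2) :
    ∫ x in a..b, φ x * ψ x ≤ F * G := by
  have hφ2 : IntervalIntegrable (fun x => φ x ^ 2) volume a b := (hφ.pow 2).intervalIntegrable _ _
  have hψ2 : IntervalIntegrable (fun x => ψ x ^ 2) volume a b := (hψ.pow 2).intervalIntegrable _ _
  have hφψ : IntervalIntegrable (fun x => φ x * ψ x) volume a b :=
    (hφ.mul hψ).intervalIntegrable _ _
  -- the quadratic `t ↦ ∫ (t φ + ψ)²` is nonnegative, so its discriminant is not positive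
  have hquad : ∀ t : ℝ, 0 ≤ (∫ x in a..b, φ x ^ 2) * (t * t) + 2 * (∫ x in a..b, φ x * ψ x) * t
      + ∫ x in a..b, ψ x ^ 2 := by
    intro t
    have hexp : ∫ x in a..b, (t * φ x + ψ x) ^ 2 = (∫ x in a..b, φ x ^ 2) * (t * t)
        + 2 * (∫ x in a..b, φ x * ψ x) * t + ∫ x in a..b, ψ x ^ 2 := by
      have hpt : (fun x => (t * φ x + ψ x) ^ 2)
          = fun x => t * t * φ x ^ 2 + 2 * t * (φ x * ψ x) + ψ x ^ 2 := by
        funext x; ring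
      rw [hpt, intervalIntegral.integral_add ((hφ2.const_mul _).add (hφψ.const_mul _)) hψ2,
        intervalIntegral.integral_add (hφ2.const_mul _) (hφψ.const_mul _),
        intervalIntegral.integral_const_mul, intervalIntegral.integral_const_mul]
      ring
    exact hexp ▸ intervalIntegral.integral_nonneg hab fun x _ => sq_nonneg _
  have hdisc := discrim_le_zero hquad
  rw [discrim] at hdisc
  refine le_of_sq_le_sq ?_ (mul_nonneg hF hG)
  nlinarith [mul_le_mul hφF hψG (intervalIntegral.integral_nonneg hab fun x _ => sq_nonneg (ψ x))
    (sq_nonneg F)]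

theorem integral_le_of_integral_sq_le {φ : ℝ → ℝ} (hφ : Continuous φ) {F : ℝ} (hF : 0 ≤ F)
    (hφF : ∫ x in (0:ℝ)..1, φ x ^ 2 ≤ F ^ 2) : ∫ x in (0:ℝ)..1, φ x ≤ F := by
  simpa using integral_mul_le_of_integral_sq_le (ψ := fun _ => 1) hφ continuous_const
    zero_le_one hF zero_le_one hφF (by simp)

theorem integral_add_const_sq_le {φ : ℝ → ℝ} (hφ : Continuous φ)
    {F c : ℝ} (hF : 0 ≤ F) (hc : 0 ≤ c) (hφF : ∫ x in (0:ℝ)..1, φ x ^ 2 ≤ F ^ 2) :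
    ∫ x in (0:ℝ)..1, (φ x + c) ^ 2 ≤ (F + c) ^ 2 := by
  have hφ1 : ∫ x in (0:ℝ)..1, φ x ≤ F := integral_le_of_integral_sq_le hφ hF hφF
  have hpt : (fun x => (φ x + c) ^ 2) = fun x => φ x ^ 2 + 2 * c * φ x + c ^ 2 := by
    funext x; ring
  have hi : ∀ g : ℝ → ℝ, Continuous g → IntervalIntegrable g volume 0 1 :=
    fun g hg => hg.intervalIntegrable _ _
  rw [hpt, intervalIntegral.integral_add (hi _ (by fun_prop)) (hi _ (by fun_prop)),
    intervalIntegral.integral_add (hi _ (by fun_prop)) (hi _ (by fun_prop)),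
    intervalIntegral.integral_const_mul]
  simp only [intervalIntegral.integral_const, sub_zero, smul_eq_mul, one_mul]
  nlinarith

section Sobolev

variable {E : Type*} [NormedAddCommGroup E] [NormedSpace ℝ E] [CompleteSpace E]

theorem norm_sub_le_integral_norm_deriv {f : ℝ → E} (hf : ContDiff ℝ 1 f) {a b x y : ℝ}
    (hx : x ∈ Set.Icc a b) (hy : y ∈ Set.Icc a b) :
    ‖f x - f y‖ ≤ ∫ t in a..b, ‖deriv f t‖ := by
  have hf' : Continuous (deriv f) := hf.continuous_deriv le_rfl
  have hsub : Set.uIoc y x ⊆ Set.uIoc a b := by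
    rw [Set.uIoc_of_le (hx.1.trans hx.2)]
    rintro t ht
    rcases Set.mem_uIoc.1 ht with h | h
    · exact ⟨hy.1.trans_lt h.1, h.2.trans hx.2⟩
    · exact ⟨hx.1.trans_lt h.1, h.2.trans hy.2⟩
  calc ‖f x - f y‖ = ‖∫ t in y..x, deriv f t‖ := by
        rw [intervalIntegral.integral_deriv_eq_sub
          (fun t _ => (hf.differentiable one_ne_zero).differentiableAt)
          (hf'.intervalIntegrable _ _)]
    _ ≤ |∫ t in y..x, ‖deriv f t‖| := intervalIntegral.norm_integral_le_abs_integral_norm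
    _ ≤ |∫ t in a..b, ‖deriv f t‖| := intervalIntegral.abs_integral_mono_interval hsub
        (Filter.Eventually.of_forall fun t => norm_nonneg _) (hf'.norm.intervalIntegrable _ _)
    _ = ∫ t in a..b, ‖deriv f t‖ :=
        abs_of_nonneg (intervalIntegral.integral_nonneg (hx.1.trans hx.2) fun t _ => norm_nonneg _)

theorem norm_le_two_mul_of_integral_norm_sq_le {f : ℝ → E} (hf : ContDiff ℝ 1 f) {C : ℝ}
    (hC : 0 ≤ C) (hf0 : ∫ x in (0:ℝ)..1, ‖f x‖ ^ 2 ≤ C ^ 2)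
    (hf1 : ∫ x in (0:ℝ)..1, ‖deriv f x‖ ^ 2 ≤ C ^ 2) {x : ℝ} (hx : x ∈ Set.Icc (0:ℝ) 1) :
    ‖f x‖ ≤ 2 * C := by
  have hcont : Continuous fun t => ‖f t‖ := hf.continuous.norm
  obtain ⟨x₀, hx₀, hmin⟩ := isCompact_Icc.exists_isMinOn (Set.nonempty_Icc.2 zero_le_one)
    hcont.continuousOn
  have hx₀C : ‖f x₀‖ ≤ C := by
    have h := intervalIntegral.integral_mono_on zero_le_one
      (intervalIntegrable_const (μ := volume)) (hcont.intervalIntegrable _ _) fun t ht => hmin ht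
    simp only [intervalIntegral.integral_const, sub_zero, one_smul] at h
    exact h.trans (integral_le_of_integral_sq_le hcont hC hf0)
  have hxx₀ : ‖f x - f x₀‖ ≤ C := (norm_sub_le_integral_norm_deriv hf hx hx₀).trans
    (integral_le_of_integral_sq_le (hf.continuous_deriv le_rfl).norm hC hf1)
  calc ‖f x‖ ≤ ‖f x₀‖ + ‖f x - f x₀‖ := norm_le_insert' _ _
    _ ≤ 2 * C := by linarith

end Sobolev

theorem deriv_sub_of_differentiable {E : Type*} [NormedAddCommGroup E] [NormedSpace ℝ E]
    {f g : ℝ → E} (hf : Differentiable ℝ f) (hg : Differentiable ℝ g) :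
    deriv (f - g) = deriv f - deriv g :=
  funext fun x => deriv_sub (hf x) (hg x)

section H2

variable {N : ℕ}

theorem H2norm_nonneg (g : ℝ → EuclideanSpace ℂ (Fin N)) : 0 ≤ H2norm g := Real.sqrt_nonneg _

theorem H2norm_sq (g : ℝ → EuclideanSpace ℂ (Fin N)) :
    H2norm g ^ 2 = ∫ x in (0:ℝ)..1, (‖g x‖ ^ 2 + ‖deriv g x‖ ^ 2 + ‖deriv (deriv g) x‖ ^ 2) :=
  Real.sq_sqrt (intervalIntegral.integral_nonneg zero_le_one fun x _ => by positivity)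

variable {g h : ℝ → EuclideanSpace ℂ (Fin N)}

theorem integral_le_H2norm_sq (hg : ContDiff ℝ 2 g) {φ : ℝ → ℝ} (hφ : Continuous φ)
    (hle : ∀ x, φ x ≤ ‖g x‖ ^ 2 + ‖deriv g x‖ ^ 2 + ‖deriv (deriv g) x‖ ^ 2) :
    ∫ x in (0:ℝ)..1, φ x ≤ H2norm g ^ 2 := by
  have hg' : ContDiff ℝ 1 (deriv g) := hg.deriv' (n := 1)
  have : Continuous (deriv g) := hg'.continuous
  have : Continuous (deriv (deriv g)) := hg'.continuous_deriv le_rfl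
  have : Continuous g := hg.continuous
  rw [H2norm_sq]
  exact intervalIntegral.integral_mono_on zero_le_one (hφ.intervalIntegrable _ _)
    ((by fun_prop : Continuous _).intervalIntegrable _ _) fun x _ => hle x

theorem norm_deriv_le_two_mul_H2norm (hg : ContDiff ℝ 2 g) {x : ℝ} (hx : x ∈ Set.Icc (0:ℝ) 1) :
    ‖deriv g x‖ ≤ 2 * H2norm g := by
  have hg' : ContDiff ℝ 1 (deriv g) := hg.deriv' (n := 1)
  refine norm_le_two_mul_of_integral_norm_sq_le hg' (H2norm_nonneg g) ?_ ?_ hx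
  · exact integral_le_H2norm_sq hg (hg'.continuous.norm.pow 2) fun x => by
      linarith [sq_nonneg ‖g x‖, sq_nonneg ‖deriv (deriv g) x‖]
  · exact integral_le_H2norm_sq hg ((hg'.continuous_deriv le_rfl).norm.pow 2) fun x => by
      linarith [sq_nonneg ‖g x‖, sq_nonneg ‖deriv g x‖]

theorem integral_norm_deriv_deriv_sq_le_H2norm_sq (hg : ContDiff ℝ 2 g) :
    ∫ x in (0:ℝ)..1, ‖deriv (deriv g) x‖ ^ 2 ≤ H2norm g ^ 2 :=
  integral_le_H2norm_sq hg (((hg.deriv' (n := 1)).continuous_deriv le_rfl).norm.pow 2)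
    fun x => by linarith [sq_nonneg ‖g x‖, sq_nonneg ‖deriv g x‖]

theorem H2inner_sub_left {g₁ g₂ : ℝ → EuclideanSpace ℂ (Fin N)} (hg₁ : ContDiff ℝ 2 g₁)
    (hg₂ : ContDiff ℝ 2 g₂) (hh : ContDiff ℝ 2 h) :
    H2inner (g₁ - g₂) h = H2inner g₁ h - H2inner g₂ h := by
  have hg₁' : ContDiff ℝ 1 (deriv g₁) := hg₁.deriv' (n := 1)
  have hg₂' : ContDiff ℝ 1 (deriv g₂) := hg₂.deriv' (n := 1)
  have hh' : ContDiff ℝ 1 (deriv h) := hh.deriv' (n := 1)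
  have h1 : deriv (g₁ - g₂) = deriv g₁ - deriv g₂ :=
    deriv_sub_of_differentiable (hg₁.differentiable two_ne_zero) (hg₂.differentiable two_ne_zero)
  have h2 : deriv (deriv (g₁ - g₂)) = deriv (deriv g₁) - deriv (deriv g₂) := by
    rw [h1]
    exact deriv_sub_of_differentiable (hg₁'.differentiable one_ne_zero)
      (hg₂'.differentiable one_ne_zero)
  have := hg₁.continuous; have := hg₂.continuous; have := hh.continuous
  have := hg₁'.continuous; have := hg₂'.continuous; have := hh'.continuous
  have := hg₁'.continuous_deriv le_rfl; have := hg₂'.continuous_deriv le_rfl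
  have := hh'.continuous_deriv le_rfl
  rw [H2inner, H2inner, H2inner, h2, h1]
  simp only [Pi.sub_apply, inner_sub_left, Complex.sub_re]
  rw [← intervalIntegral.integral_sub ((by fun_prop : Continuous _).intervalIntegrable _ _)
    ((by fun_prop : Continuous _).intervalIntegrable _ _)]
  congr 1; ext x; ring

theorem abs_H2inner_le (hg : ContDiff ℝ 2 g) (hh : ContDiff ℝ 2 h) :
    |H2inner g h| ≤ H2norm g * H2norm h := by
  have hg' : ContDiff ℝ 1 (deriv g) := hg.deriv' (n := 1)
  have hh' : ContDiff ℝ 1 (deriv h) := hh.deriv' (n := 1)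
  have := hg.continuous; have := hh.continuous; have := hg'.continuous; have := hh'.continuous
  have := hg'.continuous_deriv le_rfl; have := hh'.continuous_deriv le_rfl
  let jet : (ℝ → EuclideanSpace ℂ (Fin N)) → ℝ → ℝ := fun f x =>
    √(‖f x‖ ^ 2 + ‖deriv f x‖ ^ 2 + ‖deriv (deriv f) x‖ ^ 2)
  have hjet : ∀ f : ℝ → EuclideanSpace ℂ (Fin N),
      ∫ x in (0:ℝ)..1, jet f x ^ 2 = H2norm f ^ 2 := fun f => by
    simp only [jet, H2norm_sq]
    congr 1; ext x; exact Real.sq_sqrt (by positivity)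
  have hre : ∀ u v : EuclideanSpace ℂ (Fin N), |(inner ℂ u v).re| ≤ ‖u‖ * ‖v‖ := fun u v =>
    (Complex.abs_re_le_norm _).trans (norm_inner_le_norm u v)
  have hpt : ∀ x, ‖(inner ℂ (g x) (h x)).re + (inner ℂ (deriv g x) (deriv h x)).re
      + (inner ℂ (deriv (deriv g) x) (deriv (deriv h) x)).re‖ ≤ jet g x * jet h x := fun x => by
    have hcs := Real.sum_mul_le_sqrt_mul_sqrt Finset.univ
      ![‖g x‖, ‖deriv g x‖, ‖deriv (deriv g) x‖] ![‖h x‖, ‖deriv h x‖, ‖deriv (deriv h) x‖]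
    simp only [Fin.sum_univ_three, Matrix.cons_val_zero, Matrix.cons_val_one,
      Matrix.cons_val_two, Matrix.tail_cons, Matrix.head_cons] at hcs
    refine (Real.norm_eq_abs _ ▸ abs_add_three _ _ _).trans (le_trans ?_ hcs)
    gcongr <;> exact hre _ _
  calc |H2inner g h| ≤ ∫ x in (0:ℝ)..1, jet g x * jet h x :=
        intervalIntegral.norm_integral_le_of_norm_le zero_le_one
          (Filter.Eventually.of_forall fun x _ => hpt x)
          ((by fun_prop : Continuous _).intervalIntegrable _ _)
    _ ≤ H2norm g * H2norm h :=
        integral_mul_le_of_integral_sq_le (by fun_prop) (by fun_prop) zero_le_one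
          (H2norm_nonneg g) (H2norm_nonneg h) (hjet g).le (hjet h).le

end H2

section PointwiseEstimate

variable {E : Type*} [NormedAddCommGroup E] [InnerProductSpace ℂ E]

theorem abs_re_inner_sub_re_inner_le (p₁ p₂ q₁ q₂ : E) :
    |(inner ℂ p₁ q₁).re - (inner ℂ p₂ q₂).re| ≤ ‖p₁ - p₂‖ * ‖q₁‖ + ‖p₂‖ * ‖q₁ - q₂‖ := by
  have hsplit : inner ℂ p₁ q₁ - inner ℂ p₂ q₂ = inner ℂ (p₁ - p₂) q₁ + inner ℂ p₂ (q₁ - q₂) := by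
    rw [inner_sub_left, inner_sub_right]; ring
  calc |(inner ℂ p₁ q₁).re - (inner ℂ p₂ q₂).re|
      = |(inner ℂ (p₁ - p₂) q₁ + inner ℂ p₂ (q₁ - q₂)).re| := by rw [← hsplit, Complex.sub_re]
    _ ≤ ‖inner ℂ (p₁ - p₂) q₁‖ + ‖inner ℂ p₂ (q₁ - q₂)‖ :=
        (Complex.abs_re_le_norm _).trans (norm_add_le _ _)
    _ ≤ ‖p₁ - p₂‖ * ‖q₁‖ + ‖p₂‖ * ‖q₁ - q₂‖ :=
        add_le_add (norm_inner_le_norm _ _) (norm_inner_le_norm _ _)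

variable (B : E →L[ℂ] E →L[ℂ] E) (A : E →L[ℂ] E) {a a₁ a₂ b c d₁ d₂ : E} {ρ σ τ : ℝ}

theorem norm_quadratic_le (ha : ‖a‖ ≤ ρ) : ‖B a a + A a‖ ≤ (2 * ‖B‖ * ρ + ‖A‖) * ρ := by
  have hρ : 0 ≤ ρ := (norm_nonneg a).trans ha
  calc ‖B a a + A a‖ ≤ ‖B‖ * ‖a‖ * ‖a‖ + ‖A‖ * ‖a‖ :=
        (norm_add_le _ _).trans (add_le_add (B.le_opNorm₂ a a) (A.le_opNorm a))
    _ ≤ (2 * ‖B‖ * ρ + ‖A‖) * ρ := by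
        have : ‖B‖ * ‖a‖ * ‖a‖ ≤ ‖B‖ * ρ * ρ := by gcongr
        have : ‖A‖ * ‖a‖ ≤ ‖A‖ * ρ := by gcongr
        nlinarith [mul_nonneg (norm_nonneg B) (mul_nonneg hρ hρ)]

theorem norm_quadratic_sub_le (ha₁ : ‖a₁‖ ≤ ρ) (ha₂ : ‖a₂‖ ≤ ρ) :
    ‖(B a₁ a₁ + A a₁) - (B a₂ a₂ + A a₂)‖ ≤ (2 * ‖B‖ * ρ + ‖A‖) * ‖a₁ - a₂‖ := by
  have hsplit : (B a₁ a₁ + A a₁) - (B a₂ a₂ + A a₂)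
      = B (a₁ - a₂) a₁ + B a₂ (a₁ - a₂) + A (a₁ - a₂) := by
    simp only [map_sub, sub_apply]; abel
  rw [hsplit]
  calc _ ≤ ‖B‖ * ‖a₁ - a₂‖ * ‖a₁‖ + ‖B‖ * ‖a₂‖ * ‖a₁ - a₂‖ + ‖A‖ * ‖a₁ - a₂‖ :=
        (norm_add₃_le).trans (add_le_add_three (B.le_opNorm₂ _ _) (B.le_opNorm₂ _ _)
          (A.le_opNorm _))
    _ ≤ ‖B‖ * ‖a₁ - a₂‖ * ρ + ‖B‖ * ρ * ‖a₁ - a₂‖ + ‖A‖ * ‖a₁ - a₂‖ := by gcongr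
    _ = (2 * ‖B‖ * ρ + ‖A‖) * ‖a₁ - a₂‖ := by ring

theorem norm_linearized_le (ha : ‖a‖ ≤ ρ) (hb : ‖b‖ ≤ τ) :
    ‖(2:ℂ) • B a b + A b‖ ≤ (2 * ‖B‖ * ρ + ‖A‖) * τ := by
  calc ‖(2:ℂ) • B a b + A b‖ ≤ 2 * (‖B‖ * ‖a‖ * ‖b‖) + ‖A‖ * ‖b‖ := by
        refine (norm_add_le _ _).trans (add_le_add ?_ (A.le_opNorm b))
        rw [norm_smul, Complex.norm_ofNat]
        exact mul_le_mul_of_nonneg_left (B.le_opNorm₂ a b) zero_le_two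
    _ ≤ (2 * ‖B‖ * ρ + ‖A‖) * τ := by
        have hρ : 0 ≤ ρ := (norm_nonneg a).trans ha
        have hτ : 0 ≤ τ := (norm_nonneg b).trans hb
        have : ‖B‖ * ‖a‖ * ‖b‖ ≤ ‖B‖ * ρ * τ := by gcongr
        have : ‖A‖ * ‖b‖ ≤ ‖A‖ * τ := by gcongr
        nlinarith

theorem abs_re_inner_linearized_sub_le (ha₁ : ‖a₁‖ ≤ ρ) (ha₂ : ‖a₂‖ ≤ ρ) (hσ : ‖a₁ - a₂‖ ≤ σ)
    (hb : ‖b‖ ≤ τ) :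
    |(inner ℂ (c + (2:ℂ) • B a₁ b + A b) (d₁ + (B a₁ a₁ + A a₁))).re
      - (inner ℂ (c + (2:ℂ) • B a₂ b + A b) (d₂ + (B a₂ a₂ + A a₂))).re|
    ≤ (‖d₁‖ + (2 * ‖B‖ * ρ + ‖A‖) * ρ) * (2 * ‖B‖ * σ * τ)
      + (‖c‖ + (2 * ‖B‖ * ρ + ‖A‖) * τ) * (‖d₁ - d₂‖ + (2 * ‖B‖ * ρ + ‖A‖) * σ) := by
  have hκ : 0 ≤ 2 * ‖B‖ * ρ + ‖A‖ := by
    have := (norm_nonneg a₁).trans ha₁; positivity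
  have hp : ‖(c + (2:ℂ) • B a₁ b + A b) - (c + (2:ℂ) • B a₂ b + A b)‖ ≤ 2 * ‖B‖ * σ * τ := by
    have hσ₀ : 0 ≤ σ := (norm_nonneg _).trans hσ
    have hτ : 0 ≤ τ := (norm_nonneg b).trans hb
    rw [show (c + (2:ℂ) • B a₁ b + A b) - (c + (2:ℂ) • B a₂ b + A b) = (2:ℂ) • B (a₁ - a₂) b by
      simp only [map_sub, sub_apply, smul_sub]; abel, norm_smul, Complex.norm_ofNat]
    calc 2 * ‖B (a₁ - a₂) b‖ ≤ 2 * (‖B‖ * ‖a₁ - a₂‖ * ‖b‖) := by gcongr; exact B.le_opNorm₂ _ _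
      _ ≤ 2 * ‖B‖ * σ * τ := by rw [← mul_assoc, ← mul_assoc]; gcongr
  have hq₁ : ‖d₁ + (B a₁ a₁ + A a₁)‖ ≤ ‖d₁‖ + (2 * ‖B‖ * ρ + ‖A‖) * ρ :=
    (norm_add_le _ _).trans (add_le_add_right (norm_quadratic_le B A ha₁) _)
  have hp₂ : ‖c + (2:ℂ) • B a₂ b + A b‖ ≤ ‖c‖ + (2 * ‖B‖ * ρ + ‖A‖) * τ := by
    rw [add_assoc]
    exact (norm_add_le _ _).trans (add_le_add_right (norm_linearized_le B A ha₂ hb) _)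
  have hq : ‖(d₁ + (B a₁ a₁ + A a₁)) - (d₂ + (B a₂ a₂ + A a₂))‖
      ≤ ‖d₁ - d₂‖ + (2 * ‖B‖ * ρ + ‖A‖) * σ := by
    rw [add_sub_add_comm]
    exact (norm_add_le _ _).trans (add_le_add_right ((norm_quadratic_sub_le B A ha₁ ha₂).trans
      (mul_le_mul_of_nonneg_left hσ hκ)) _)
  refine (abs_re_inner_sub_re_inner_le _ _ _ _).trans ?_
  rw [mul_comm ‖_ - _‖]
  exact add_le_add (mul_le_mul hq₁ hp (norm_nonneg _) ((norm_nonneg _).trans hq₁))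
    (mul_le_mul hp₂ hq (norm_nonneg _) ((norm_nonneg _).trans hp₂))

end PointwiseEstimate

theorem abs_integral_weighted_sub_le {f₁ f₂ : ℝ → ℝ} (hf₁ : Continuous f₁) (hf₂ : Continuous f₂)
    {lam : ℝ} (hlam : 0 ≤ lam) :
    |(∫ x in (0:ℝ)..1, 2 * f₁ x * Real.exp (-2 * lam * x))
      - ∫ x in (0:ℝ)..1, 2 * f₂ x * Real.exp (-2 * lam * x)|
    ≤ 2 * ∫ x in (0:ℝ)..1, |f₁ x - f₂ x| := by
  have hint : ∀ f : ℝ → ℝ, Continuous f →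
      IntervalIntegrable (fun x => 2 * f x * Real.exp (-2 * lam * x)) volume 0 1 :=
    fun f hf => (by fun_prop : Continuous _).intervalIntegrable _ _
  rw [← intervalIntegral.integral_sub (hint f₁ hf₁) (hint f₂ hf₂),
    ← intervalIntegral.integral_const_mul, ← Real.norm_eq_abs]
  refine intervalIntegral.norm_integral_le_of_norm_le zero_le_one
    (Filter.Eventually.of_forall fun x hx => ?_)
    ((continuous_const.mul (hf₁.sub hf₂).abs).intervalIntegrable _ _)
  have hw : Real.exp (-2 * lam * x) ≤ 1 := Real.exp_le_one_iff.2 (by nlinarith [hx.1])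
  rw [← sub_mul, ← mul_sub, Real.norm_eq_abs, abs_mul, abs_mul, abs_two,
    abs_of_pos (Real.exp_pos _)]
  exact mul_le_of_le_one_right (by positivity) hw

section Linearization

variable {N : ℕ}
  (B : EuclideanSpace ℂ (Fin N) →L[ℂ] EuclideanSpace ℂ (Fin N) →L[ℂ] EuclideanSpace ℂ (Fin N))
  (A : EuclideanSpace ℂ (Fin N) →L[ℂ] EuclideanSpace ℂ (Fin N))

noncomputable def frechetIntegrand (y h : ℝ → EuclideanSpace ℂ (Fin N)) (x : ℝ) : ℝ :=
  (inner ℂ (deriv (deriv h) x + (2:ℂ) • B (deriv y x) (deriv h x) + A (deriv h x))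
    (deriv (deriv y) x + (B (deriv y x) (deriv y x) + A (deriv y x)))).re

theorem Lfun_eq (lam α : ℝ) (y h : ℝ → EuclideanSpace ℂ (Fin N)) :
    Lfun B A lam α y h = Real.exp (2 * lam) *
      (∫ x in (0:ℝ)..1, 2 * frechetIntegrand B A y h x * Real.exp (-2 * lam * x))
      + 2 * α * H2inner y h :=
  rfl

variable {y y₁ y₂ h : ℝ → EuclideanSpace ℂ (Fin N)} {R : ℝ}

theorem continuous_frechetIntegrand (hy : ContDiff ℝ 2 y) (hh : ContDiff ℝ 2 h) :
    Continuous (frechetIntegrand B A y h) := by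
  have hy' : ContDiff ℝ 1 (deriv y) := hy.deriv' (n := 1)
  have hh' : ContDiff ℝ 1 (deriv h) := hh.deriv' (n := 1)
  have := hy'.continuous; have := hh'.continuous
  have := hy'.continuous_deriv le_rfl; have := hh'.continuous_deriv le_rfl
  unfold frechetIntegrand
  fun_prop

theorem abs_frechetIntegrand_sub_le (hy₁ : ContDiff ℝ 2 y₁) (hy₂ : ContDiff ℝ 2 y₂)
    (hh : ContDiff ℝ 2 h) (hR₁ : H2norm y₁ ≤ R) (hR₂ : H2norm y₂ ≤ R) {x : ℝ}
    (hx : x ∈ Set.Icc (0:ℝ) 1) :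
    |frechetIntegrand B A y₁ h x - frechetIntegrand B A y₂ h x|
      ≤ (‖deriv (deriv y₁) x‖ + (4 * ‖B‖ * R + ‖A‖) * (2 * R))
          * (2 * ‖B‖ * (2 * H2norm (y₁ - y₂)) * (2 * H2norm h))
        + (‖deriv (deriv h) x‖ + (4 * ‖B‖ * R + ‖A‖) * (2 * H2norm h))
          * (‖deriv (deriv (y₁ - y₂)) x‖ + (4 * ‖B‖ * R + ‖A‖) * (2 * H2norm (y₁ - y₂))) := by
  have hκ : 4 * ‖B‖ * R + ‖A‖ = 2 * ‖B‖ * (2 * R) + ‖A‖ := by ring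
  have hR' : ∀ y : ℝ → EuclideanSpace ℂ (Fin N), ContDiff ℝ 2 y → H2norm y ≤ R →
      ‖deriv y x‖ ≤ 2 * R := fun y hy hyR =>
    (norm_deriv_le_two_mul_H2norm hy hx).trans (by gcongr)
  have hu' : deriv (y₁ - y₂) = deriv y₁ - deriv y₂ :=
    deriv_sub_of_differentiable (hy₁.differentiable two_ne_zero) (hy₂.differentiable two_ne_zero)
  have hu'' : deriv (deriv (y₁ - y₂)) = deriv (deriv y₁) - deriv (deriv y₂) := by
    rw [hu']
    exact deriv_sub_of_differentiable ((hy₁.deriv' (n := 1)).differentiable one_ne_zero)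
      ((hy₂.deriv' (n := 1)).differentiable one_ne_zero)
  have hux : ‖deriv (y₁ - y₂) x‖ ≤ 2 * H2norm (y₁ - y₂) :=
    norm_deriv_le_two_mul_H2norm (hy₁.sub hy₂) hx
  rw [hu', Pi.sub_apply] at hux
  rw [hu'', Pi.sub_apply, hκ]
  exact abs_re_inner_linearized_sub_le B A (hR' y₁ hy₁ hR₁) (hR' y₂ hy₂ hR₂) hux
    (norm_deriv_le_two_mul_H2norm hh hx)

theorem integral_abs_frechetIntegrand_sub_le (hy₁ : ContDiff ℝ 2 y₁) (hy₂ : ContDiff ℝ 2 y₂)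
    (hh : ContDiff ℝ 2 h) (hR : 0 ≤ R) (hR₁ : H2norm y₁ ≤ R) (hR₂ : H2norm y₂ ≤ R) :
    ∫ x in (0:ℝ)..1, |frechetIntegrand B A y₁ h x - frechetIntegrand B A y₂ h x|
      ≤ (1 + 8 * ‖B‖ * R + 2 * ‖A‖) * (1 + 16 * ‖B‖ * R + 2 * ‖A‖)
        * H2norm (y₁ - y₂) * H2norm h := by
  set κ := 4 * ‖B‖ * R + ‖A‖
  set Hu := H2norm (y₁ - y₂)
  set Hh := H2norm h
  have hu : ContDiff ℝ 2 (y₁ - y₂) := hy₁.sub hy₂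
  have := (hy₁.deriv' (n := 1)).continuous_deriv le_rfl
  have := (hh.deriv' (n := 1)).continuous_deriv le_rfl
  have := (hu.deriv' (n := 1)).continuous_deriv le_rfl
  have hHu : 0 ≤ Hu := H2norm_nonneg _
  have hHh : 0 ≤ Hh := H2norm_nonneg h
  have hy₁L1 : ∫ x in (0:ℝ)..1, (‖deriv (deriv y₁) x‖ + κ * (2 * R)) ≤ R + κ * (2 * R) :=
    integral_le_of_integral_sq_le (by fun_prop) (by positivity)
      (integral_add_const_sq_le (by fun_prop) hR (by positivity)
        ((integral_norm_deriv_deriv_sq_le_H2norm_sq hy₁).trans (by gcongr; exact H2norm_nonneg _)))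
  have hhuL1 : ∫ x in (0:ℝ)..1, (‖deriv (deriv h) x‖ + κ * (2 * Hh))
      * (‖deriv (deriv (y₁ - y₂)) x‖ + κ * (2 * Hu)) ≤ (Hh + κ * (2 * Hh)) * (Hu + κ * (2 * Hu)) :=
    integral_mul_le_of_integral_sq_le (by fun_prop) (by fun_prop) zero_le_one (by positivity)
      (by positivity)
      (integral_add_const_sq_le (by fun_prop) hHh (by positivity)
        (integral_norm_deriv_deriv_sq_le_H2norm_sq hh))
      (integral_add_const_sq_le (by fun_prop) hHu (by positivity)
        (integral_norm_deriv_deriv_sq_le_H2norm_sq hu))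
  calc ∫ x in (0:ℝ)..1, |frechetIntegrand B A y₁ h x - frechetIntegrand B A y₂ h x|
      ≤ ∫ x in (0:ℝ)..1, ((‖deriv (deriv y₁) x‖ + κ * (2 * R)) * (2 * ‖B‖ * (2 * Hu) * (2 * Hh))
          + (‖deriv (deriv h) x‖ + κ * (2 * Hh)) * (‖deriv (deriv (y₁ - y₂)) x‖ + κ * (2 * Hu))) :=
        intervalIntegral.integral_mono_on zero_le_one
          (((continuous_frechetIntegrand B A hy₁ hh).sub
            (continuous_frechetIntegrand B A hy₂ hh)).abs.intervalIntegrable _ _)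
          ((by fun_prop : Continuous _).intervalIntegrable _ _)
          fun x hx => abs_frechetIntegrand_sub_le B A hy₁ hy₂ hh hR₁ hR₂ hx
    _ = (∫ x in (0:ℝ)..1, (‖deriv (deriv y₁) x‖ + κ * (2 * R))) * (2 * ‖B‖ * (2 * Hu) * (2 * Hh))
        + ∫ x in (0:ℝ)..1, (‖deriv (deriv h) x‖ + κ * (2 * Hh))
          * (‖deriv (deriv (y₁ - y₂)) x‖ + κ * (2 * Hu)) := by
        rw [intervalIntegral.integral_add ((by fun_prop : Continuous _).intervalIntegrable _ _)
          ((by fun_prop : Continuous _).intervalIntegrable _ _),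
          intervalIntegral.integral_mul_const]
    _ ≤ (R + κ * (2 * R)) * (2 * ‖B‖ * (2 * Hu) * (2 * Hh))
        + (Hh + κ * (2 * Hh)) * (Hu + κ * (2 * Hu)) := by gcongr
    _ = _ := by ring

end Linearization

theorem lipschitz_frechet_derivative_general {N : ℕ}
    (B : EuclideanSpace ℂ (Fin N) →L[ℂ] EuclideanSpace ℂ (Fin N) →L[ℂ] EuclideanSpace ℂ (Fin N))
    (A : EuclideanSpace ℂ (Fin N) →L[ℂ] EuclideanSpace ℂ (Fin N))
    (R : ℝ) (hR : 0 < R) :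
    ∀ lam : ℝ, 1 ≤ lam → ∀ α ∈ Set.Icc (0:ℝ) 1,
      ∃ D : ℝ, 0 < D ∧
        ∀ y₁ y₂ h : ℝ → EuclideanSpace ℂ (Fin N),
          ContDiff ℝ 2 y₁ → ContDiff ℝ 2 y₂ → ContDiff ℝ 2 h →
          H2norm y₁ ≤ R → H2norm y₂ ≤ R →
          |Lfun B A lam α y₁ h - Lfun B A lam α y₂ h|
            ≤ D * H2norm (y₁ - y₂) * H2norm h := by
  intro lam hlam α hα
  set K := (1 + 8 * ‖B‖ * R + 2 * ‖A‖) * (1 + 16 * ‖B‖ * R + 2 * ‖A‖)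
  refine ⟨2 * Real.exp (2 * lam) * K + 2, by positivity, fun y₁ y₂ h hy₁ hy₂ hh hR₁ hR₂ => ?_⟩
  have hweighted := (abs_integral_weighted_sub_le (continuous_frechetIntegrand B A hy₁ hh)
    (continuous_frechetIntegrand B A hy₂ hh) (zero_le_one.trans hlam)).trans
    (mul_le_mul_of_nonneg_left
      (integral_abs_frechetIntegrand_sub_le B A hy₁ hy₂ hh hR.le hR₁ hR₂) zero_le_two)
  have hinner : |H2inner y₁ h - H2inner y₂ h| ≤ H2norm (y₁ - y₂) * H2norm h :=
    H2inner_sub_left hy₁ hy₂ hh ▸ abs_H2inner_le (hy₁.sub hy₂) hh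
  rw [Lfun_eq, Lfun_eq, add_sub_add_comm, ← mul_sub, ← mul_sub]
  calc _ ≤ Real.exp (2 * lam) * |_ - _| + 2 * α * |H2inner y₁ h - H2inner y₂ h| := by
        refine (abs_add_le _ _).trans_eq ?_
        rw [abs_mul, abs_mul, abs_of_pos (Real.exp_pos _),
          abs_of_nonneg (show (0:ℝ) ≤ 2 * α by linarith [hα.1])]
    _ ≤ Real.exp (2 * lam) * (2 * (K * H2norm (y₁ - y₂) * H2norm h))
        + 2 * 1 * (H2norm (y₁ - y₂) * H2norm h) := by
        gcongr
        exact hα.2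
    _ = (2 * Real.exp (2 * lam) * K + 2) * H2norm (y₁ - y₂) * H2norm h := by ring

/-- **Theorem 4.2 (Lipschitz continuity of the Fréchet derivative of `J_{λ,α}`).**
For every `λ ≥ 1` and `α ∈ [0,1]` there exists `D > 0` such that for all `C²` functions
`y₁, y₂, h : [0,1] → ℂ^N` with `‖y₁‖_{H²} ≤ R`, `‖y₂‖_{H²} ≤ R`:
`|L_{λ,α,y₁}(h) − L_{λ,α,y₂}(h)| ≤ D ‖y₁ − y₂‖_{H²} ‖h‖_{H²}`. -/
theorem lipschitz_frechet_derivative {N : ℕ} (hN : 1 ≤ N)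
    (B : EuclideanSpace ℂ (Fin N) →L[ℂ] EuclideanSpace ℂ (Fin N) →L[ℂ] EuclideanSpace ℂ (Fin N))
    (hBsymm : ∀ z w, B z w = B w z)
    (A : EuclideanSpace ℂ (Fin N) →L[ℂ] EuclideanSpace ℂ (Fin N))
    (R : ℝ) (hR : 0 < R) :
    ∀ lam : ℝ, 1 ≤ lam → ∀ α ∈ Set.Icc (0:ℝ) 1,
      ∃ D : ℝ, 0 < D ∧
        ∀ y₁ y₂ h : ℝ → EuclideanSpace ℂ (Fin N),
          ContDiff ℝ 2 y₁ → ContDiff ℝ 2 y₂ → ContDiff ℝ 2 h →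
          H2norm y₁ ≤ R → H2norm y₂ ≤ R →
          |Lfun B A lam α y₁ h - Lfun B A lam α y₂ h|
            ≤ D * H2norm (y₁ - y₂) * H2norm h :=
  lipschitz_frechet_derivative_general B A R hR
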